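/- Let M→N be a matroid perspective on a finite linearly ordered ground set E. Let B ⊆ E be independent in M and spanning in N, and let A ⊆ E satisfy B∖Int_N(B) ⊆ A ⊆ B∪Ext_M(B). Then the following four equalities hold: Int_N(A) = Int_N(B) ∩ A, P_N(A) = Int_N(B) ∖ A, Ext_M(A) = Ext_M(B) ∖ A, and Q_M(A) = Ext_M(B) ∩ A. -/

import Mathlib

/-- A circuit of a matroid: a minimal dependent set. -/
def Matroid.IsCircuit' {α : Type*} (M : Matroid α) (C : Set α) : Prop :=
  M.Dep C ∧ ∀ D, M.Dep D → D ⊆ C → D = C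

/-- A cocircuit of a matroid: a circuit of the dual matroid. -/
def Matroid.IsCocircuit' {α : Type*} (M : Matroid α) (C : Set α) : Prop :=
  M✶.IsCircuit' C

/-- The rank of a set in a matroid: the largest cardinality of an independent subset. -/
noncomputable def Matroid.rk' {α : Type*} (M : Matroid α) (A : Set α) : ℕ :=
  sSup {n : ℕ | ∃ I, I ⊆ A ∧ M.Indep I ∧ I.ncard = n}

/-- `e` is the minimum element of the set `C`. -/
def IsMinOf {α : Type*} [LinearOrder α] (C : Set α) (e : α) : Prop :=
  e ∈ C ∧ ∀ x ∈ C, e ≤ x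

/-- `Int_M(A)`: internally active elements of `A` w.r.t. `M`
(the ground set is the whole type, so `E ∖ A = Aᶜ`). -/
def IntSet {α : Type*} [LinearOrder α] (M : Matroid α) (A : Set α) : Set α :=
  {e | e ∈ A ∧ ∃ C, M.IsCocircuit' C ∧ C ⊆ Aᶜ ∪ {e} ∧ IsMinOf C e}

/-- `Ext_M(A)`: externally active elements w.r.t. `M`. -/
def ExtSet {α : Type*} [LinearOrder α] (M : Matroid α) (A : Set α) : Set α :=
  {e | e ∉ A ∧ ∃ C, M.IsCircuit' C ∧ C ⊆ A ∪ {e} ∧ IsMinOf C e}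

/-- `P_M(A)`: smallest elements of cocircuits of `M` contained in `E ∖ A`. -/
def PActSet {α : Type*} [LinearOrder α] (M : Matroid α) (A : Set α) : Set α :=
  {e | e ∉ A ∧ ∃ C, M.IsCocircuit' C ∧ C ⊆ Aᶜ ∧ IsMinOf C e}

/-- `Q_M(A)`: smallest elements of circuits of `M` contained in `A`. -/
def QActSet {α : Type*} [LinearOrder α] (M : Matroid α) (A : Set α) : Set α :=
  {e | e ∈ A ∧ ∃ C, M.IsCircuit' C ∧ C ⊆ A ∧ IsMinOf C e}

/-!
Both `Ext_M(X)` and `Q_M(X)` consist of the elements `e` lying in the `M`-closure of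
`X ∩ (e, ∞)`, and for `A` in the interval `[B ∖ Int_N(B), B ∪ Ext_M(B)]` this condition
on `A` is equivalent to `e ∉ B` together with the same condition on `B`: elements of
`A ∖ B` are externally active, hence already spanned by later elements of `B`, while the
elements of `B ∖ A` are internally active in `N`, and a circuit of `M` through `e` cannot
use them, since it would meet the witnessing cocircuit of `N` in a single element.
Dually, `Int_N` and `P_N` are `Ext` and `Q` of `N✶` at complements, and `N✶ → M✶` is again
a perspective in which `Bᶜ` is independent, so the same argument gives the other two
equalities.
-/

open Set

namespace Matroid

variable {α : Type*} {M N : Matroid α} {C K : Set α}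

lemma isCircuit'_iff : M.IsCircuit' C ↔ M.IsCircuit C :=
  isCircuit_iff.symm

lemma isCocircuit'_iff : M.IsCocircuit' K ↔ M.IsCocircuit K :=
  isCircuit'_iff

lemma IsCocircuit.isFlat_sdiff (hK : M.IsCocircuit K) : M.IsFlat (M.E \ K) := by
  refine isFlat_iff_closure_eq.2 ((M.subset_closure _).antisymm' fun x hx ↦
    ⟨M.mem_ground_of_mem_closure hx, fun hxK ↦ ?_⟩)
  obtain ⟨C, hCss, hC, hxC⟩ := M.exists_isCircuit_of_mem_closure hx fun h ↦ h.2 hxK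
  refine hC.inter_isCocircuit_ne_singleton hK (e := x) (subset_antisymm ?_ ?_)
  · rintro y ⟨hyC, hyK⟩
    rcases hCss hyC with rfl | hy
    · rfl
    · exact absurd hyK hy.2
  · rintro y rfl
    exact ⟨hxC, hxK⟩

def Orthogonal (M N : Matroid α) : Prop :=
  ∀ ⦃C K : Set α⦄ ⦃e : α⦄, M.IsCircuit C → N.IsCocircuit K → C ∩ K ≠ {e}

lemma Orthogonal.dual (h : M.Orthogonal N) : N✶.Orthogonal M✶ := fun _ _ _ hC hK ↦ by
  rw [inter_comm]
  exact h (dual_isCocircuit_iff.1 hK) hC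

lemma Orthogonal.exists_mem_ne (h : M.Orthogonal N) (hC : M.IsCircuit C) (hK : N.IsCocircuit K)
    {e : α} (he : e ∈ C ∩ K) : ∃ f ∈ C ∩ K, f ≠ e :=
  ((nontrivial_iff_ne_singleton he).2 (h hC hK)).exists_ne e

lemma orthogonal_of_forall_isFlat (hE : M.E ⊆ N.E) (hMN : ∀ F, N.IsFlat F → M.IsFlat F) :
    M.Orthogonal N := by
  intro C K e hC hK hCK
  have heC : e ∈ C := (hCK.symm.subset rfl).1
  have heK : e ∈ K := (hCK.symm.subset rfl).2
  have hsub : C \ {e} ⊆ N.E \ K := fun x ⟨hxC, hxe⟩ ↦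
    ⟨hE (hC.subset_ground hxC), fun hxK ↦ hxe (hCK.subset ⟨hxC, hxK⟩)⟩
  have hcl := M.closure_subset_closure hsub (hC.mem_closure_sdiff_singleton_of_mem heC)
  rw [(hMN _ hK.isFlat_sdiff).closure] at hcl
  exact hcl.2 heK

end Matroid

open Matroid

section ActiveSets

variable {α : Type*} [LinearOrder α] {M N : Matroid α} {A B Y : Set α} {e : α}

lemma exists_isCircuit_isMinOf_iff (he : e ∉ Y) :
    (∃ C, M.IsCircuit C ∧ C ⊆ insert e Y ∧ IsMinOf C e) ↔ e ∈ M.closure (Y ∩ Ioi e) := by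
  rw [mem_closure_iff_exists_isCircuit fun h ↦ lt_irrefl e h.2]
  constructor
  · rintro ⟨C, hC, hCY, heC, hmin⟩
    refine ⟨C, fun x hxC ↦ ?_, hC, heC⟩
    rcases hCY hxC with rfl | hxY
    · exact mem_insert x _
    · exact .inr ⟨hxY, (hmin x hxC).lt_of_ne fun h ↦ he (h ▸ hxY)⟩
  · rintro ⟨C, hCY, hC, heC⟩
    refine ⟨C, hC, hCY.trans (insert_subset_insert inter_subset_left), heC, fun x hxC ↦ ?_⟩
    rcases hCY hxC with rfl | hx
    · exact le_rfl
    · exact hx.2.le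

lemma extSet_eq_setOf_mem_closure (M : Matroid α) (X : Set α) :
    ExtSet M X = {e | e ∉ X ∧ e ∈ M.closure (X ∩ Ioi e)} := by
  ext e
  simp only [ExtSet, isCircuit'_iff, union_singleton, mem_ofPred_eq, and_congr_right_iff]
  exact exists_isCircuit_isMinOf_iff

lemma qActSet_eq_setOf_mem_closure (M : Matroid α) (X : Set α) :
    QActSet M X = {e | e ∈ X ∧ e ∈ M.closure (X ∩ Ioi e)} := by
  ext e
  simp only [QActSet, isCircuit'_iff, mem_ofPred_eq, and_congr_right_iff]
  intro heX
  have hX : (X \ {e}) ∩ Ioi e = X ∩ Ioi e := by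
    rw [sdiff_inter_right_comm, sdiff_singleton_eq_self fun h ↦ lt_irrefl e h.2]
  rw [← hX, ← exists_isCircuit_isMinOf_iff fun h ↦ h.2 rfl, insert_sdiff_singleton,
    insert_eq_of_mem heX]

lemma intSet_eq_extSet_dual (N : Matroid α) (X : Set α) : IntSet N X = ExtSet N✶ Xᶜ := by
  ext e
  simp [IntSet, ExtSet, IsCocircuit']

lemma pActSet_eq_qActSet_dual (N : Matroid α) (X : Set α) : PActSet N X = QActSet N✶ Xᶜ := by
  ext e
  simp [PActSet, QActSet, IsCocircuit']

lemma closure_inter_Ioi_subset_of_subset_union_extSet (hB : B ⊆ M.E)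
    (hAB : A ⊆ B ∪ ExtSet M B) (e : α) : M.closure (A ∩ Ioi e) ⊆ M.closure (B ∩ Ioi e) := by
  refine M.closure_subset_closure_of_subset_closure fun a ⟨haA, hea⟩ ↦ ?_
  rcases hAB haA with haB | haExt
  · exact M.mem_closure_of_mem' ⟨haB, hea⟩ (hB haB)
  · rw [extSet_eq_setOf_mem_closure] at haExt
    exact M.closure_subset_closure (inter_subset_inter_right B (Ioi_subset_Ioi hea.le)) haExt.2

lemma Matroid.Indep.notMem_closure_inter_Ioi (hB : M.Indep B) (he : e ∈ B) :
    e ∉ M.closure (B ∩ Ioi e) := fun hcl ↦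
  hB.notMem_closure_sdiff_of_mem he <|
    M.closure_subset_closure (fun _ hx ↦ ⟨hx.1, ne_of_gt hx.2⟩ : B ∩ Ioi e ⊆ B \ {e}) hcl

lemma mem_closure_inter_Ioi_of_sdiff_intSet_subset (hMN : M.Orthogonal N)
    (hBA : B \ IntSet N B ⊆ A) (heB : e ∉ B) (he : e ∈ M.closure (B ∩ Ioi e)) :
    e ∈ M.closure (A ∩ Ioi e) := by
  obtain ⟨C, hCB, hC, heC⟩ := M.exists_isCircuit_of_mem_closure he fun h ↦ heB h.1
  refine M.closure_subset_closure (?_ : C \ {e} ⊆ A ∩ Ioi e)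
    (hC.mem_closure_sdiff_singleton_of_mem heC)
  rintro x ⟨hxC, hxe⟩
  have hxB : x ∈ B ∩ Ioi e := (hCB hxC).resolve_left hxe
  refine ⟨hBA ⟨hxB.1, fun ⟨_, K, hK, hKB, hxK, hmin⟩ ↦ ?_⟩, hxB.2⟩
  obtain ⟨f, ⟨hfC, hfK⟩, hfx⟩ := hMN.exists_mem_ne hC (isCocircuit'_iff.1 hK) ⟨hxC, hxK⟩
  rcases hCB hfC with rfl | hfB
  · exact (hmin f hfK).not_gt hxB.2
  · exact ((hKB hfK).resolve_right hfx) hfB.1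

lemma mem_closure_inter_Ioi_iff (hMN : M.Orthogonal N) (hB : M.Indep B)
    (hBA : B \ IntSet N B ⊆ A) (hAB : A ⊆ B ∪ ExtSet M B) :
    e ∈ M.closure (A ∩ Ioi e) ↔ e ∉ B ∧ e ∈ M.closure (B ∩ Ioi e) := by
  refine ⟨fun he ↦ ?_, fun ⟨heB, he⟩ ↦
    mem_closure_inter_Ioi_of_sdiff_intSet_subset hMN hBA heB he⟩
  have heB := closure_inter_Ioi_subset_of_subset_union_extSet hB.subset_ground hAB e he
  exact ⟨fun h ↦ hB.notMem_closure_inter_Ioi h heB, heB⟩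

lemma extSet_eq_extSet_sdiff (hMN : M.Orthogonal N) (hB : M.Indep B)
    (hBA : B \ IntSet N B ⊆ A) (hAB : A ⊆ B ∪ ExtSet M B) :
    ExtSet M A = ExtSet M B \ A := by
  ext e
  simp only [extSet_eq_setOf_mem_closure, mem_ofPred_eq, mem_sdiff,
    mem_closure_inter_Ioi_iff hMN hB hBA hAB]
  tauto

lemma qActSet_eq_extSet_inter (hMN : M.Orthogonal N) (hB : M.Indep B)
    (hBA : B \ IntSet N B ⊆ A) (hAB : A ⊆ B ∪ ExtSet M B) :
    QActSet M A = ExtSet M B ∩ A := by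
  ext e
  simp only [qActSet_eq_setOf_mem_closure, extSet_eq_setOf_mem_closure, mem_ofPred_eq,
    mem_inter_iff, mem_closure_inter_Ioi_iff hMN hB hBA hAB]
  tauto

end ActiveSets

theorem stmt11_general {α : Type*} [LinearOrder α] (M N : Matroid α)
    (hNE : N.E = Set.univ)
    (hMN : ∀ F, N.IsFlat F → M.IsFlat F)
    (B : Set α) (hBi : M.Indep B) (hBs : N.Spanning B)
    (A : Set α) (h1 : B \ IntSet N B ⊆ A) (h2 : A ⊆ B ∪ ExtSet M B) :
    IntSet N A = IntSet N B ∩ A ∧ PActSet N A = IntSet N B \ A ∧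
      ExtSet M A = ExtSet M B \ A ∧ QActSet M A = ExtSet M B ∩ A := by
  have hO : M.Orthogonal N := orthogonal_of_forall_isFlat (by simp [hNE]) hMN
  have hBc : N✶.Indep Bᶜ := by simpa [hNE, compl_eq_univ_sdiff] using hBs.compl_coindep
  have hIntExt : IntSet M✶ Bᶜ = ExtSet M B := by
    rw [intSet_eq_extSet_dual, dual_dual, compl_compl]
  have h1' : Bᶜ \ IntSet M✶ Bᶜ ⊆ Aᶜ := by
    rw [hIntExt]
    exact fun x ⟨hxB, hxExt⟩ hxA ↦ (h2 hxA).elim hxB hxExt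
  have h2' : Aᶜ ⊆ Bᶜ ∪ ExtSet N✶ Bᶜ := by
    rw [← intSet_eq_extSet_dual]
    exact fun x hxA ↦ or_iff_not_imp_right.2 fun hxInt hxB ↦ hxA (h1 ⟨hxB, hxInt⟩)
  rw [intSet_eq_extSet_dual, intSet_eq_extSet_dual, pActSet_eq_qActSet_dual]
  refine ⟨?_, ?_, extSet_eq_extSet_sdiff hO hBi h1 h2, qActSet_eq_extSet_inter hO hBi h1 h2⟩
  · rw [extSet_eq_extSet_sdiff hO.dual hBc h1' h2', Set.sdiff_compl]
  · rw [qActSet_eq_extSet_inter hO.dual hBc h1' h2', sdiff_eq]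

/-- For a matroid perspective `M → N`, `B` independent in `M` and spanning in `N`,
and `A ∈ [B ∖ Int_N(B), B ∪ Ext_M(B)]`:
`Int_N(A) = Int_N(B) ∩ A`, `P_N(A) = Int_N(B) ∖ A`,
`Ext_M(A) = Ext_M(B) ∖ A`, and `Q_M(A) = Ext_M(B) ∩ A`. -/
theorem stmt11 {α : Type*} [Fintype α] [LinearOrder α] (M N : Matroid α)
    (hME : M.E = Set.univ) (hNE : N.E = Set.univ)
    (hMN : ∀ F, N.IsFlat F → M.IsFlat F)
    (B : Set α) (hBi : M.Indep B) (hBs : N.Spanning B)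
    (A : Set α) (h1 : B \ IntSet N B ⊆ A) (h2 : A ⊆ B ∪ ExtSet M B) :
    IntSet N A = IntSet N B ∩ A ∧ PActSet N A = IntSet N B \ A ∧
      ExtSet M A = ExtSet M B \ A ∧ QActSet M A = ExtSet M B ∩ A :=
  stmt11_general M N hNE hMN B hBi hBs A h1 h2
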